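/- Let a ∈ ℂ, let n ∈ ℕ_0, and let b_s(n,a) be the explicitly defined coefficients b_s(n,a) = c_s(a) + Σ_{j=1}^s (−1)^j Σ_{s > s_1 > ⋯ > s_j ≥ 0} c_{s_j}(a) · c_{s_{j−1}−s_j}(a+n−2s_j) ⋯ c_{s−s_1}(a+n−2s_1) (convention s_0 = s), where c_s(a) = (−1)^s (a−2s+1)_{2s}/(4^s s!). Then b_s(n,a) = 0 for every integer s > n. -/

import Mathlib

open Finset


/-- `c_s(a) = (−1)^s (a−2s+1)_{2s} / (4^s s!)`, with the ascending Pochhammer symbol. -/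
noncomputable def cco (a : ℂ) (s : ℕ) : ℂ :=
  (-1) ^ s * (ascPochhammer ℂ (2 * s)).eval (a - 2 * s + 1) / (4 ^ s * (Nat.factorial s : ℂ))

/-- The explicitly defined coefficients
`b_s(n,a) = c_s(a) + Σ_{j=1}^s (−1)^j Σ_{s > s_1 > ⋯ > s_j ≥ 0}
    c_{s_j}(a) · ∏_{i=1}^j c_{s_{i−1}−s_i}(a+n−2s_i)` (with `s_0 = s`).
Here the inner sum runs over strictly decreasing chains `t : Fin j → Fin s`
(so automatically `s > t 0 > ⋯ > t (j−1) ≥ 0`), where `j = j'+1` for `j' ∈ range s`. -/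
noncomputable def bco (n : ℤ) (a : ℂ) (s : ℕ) : ℂ :=
  cco a s + ∑ j' ∈ Finset.range s, (-1 : ℂ) ^ (j' + 1) *
    ∑ t ∈ Finset.univ.filter
        (fun t : Fin (j' + 1) → Fin s => ∀ i l : Fin (j' + 1), i < l → t l < t i),
      cco a (t (Fin.last j') : ℕ) *
        ∏ i : Fin (j' + 1),
          cco (a + (n : ℂ) - 2 * ((t i : ℕ) : ℂ))
            ((if (i : ℕ) = 0 then s else ((t (i - 1) : ℕ))) - (t i : ℕ))

lemma cco_zero (a : ℂ) : cco a 0 = 1 := by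
  simp [cco]

lemma asc_eval_succ (n : ℕ) (x : ℂ) :
    (ascPochhammer ℂ (n+1)).eval x = (ascPochhammer ℂ n).eval x * (x + n) := by
  rw [ascPochhammer_succ_right]
  simp [Polynomial.eval_mul]

lemma asc_eval_succ' (n : ℕ) (x : ℂ) :
    (ascPochhammer ℂ (n+1)).eval x = x * (ascPochhammer ℂ n).eval (x + 1) := by
  rw [ascPochhammer_succ_left]
  simp [Polynomial.eval_mul, Polynomial.eval_comp]

lemma cco_rec (b : ℂ) (m : ℕ) :
    cco (b + 1) (m + 1) + b / 2 * cco (b - 1) m = cco b (m + 1) := by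
  have h1 : 2 * (m + 1) = (2 * m) + 1 + 1 := by ring
  set Q := (ascPochhammer ℂ (2*m)).eval (b - 2*m) with hQ
  have e1 : (ascPochhammer ℂ (2*(m+1))).eval (b + 1 - 2*((m:ℂ)+1) + 1) = Q * b * (b+1) := by
    rw [h1, asc_eval_succ, asc_eval_succ]
    rw [show b + 1 - 2*((m:ℂ)+1) + 1 = b - 2*m by ring]
    push_cast
    ring
  have e2 : (ascPochhammer ℂ (2*(m+1))).eval (b - 2*((m:ℂ)+1) + 1) = (b - 2*m - 1) * (Q * b) := by
    rw [h1, asc_eval_succ', asc_eval_succ]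
    rw [show b - 2*((m:ℂ)+1) + 1 = b - 2*(m:ℂ) - 1 by ring,
      show b - 2*(m:ℂ) - 1 + 1 = b - 2*(m:ℂ) by ring]
    push_cast
    ring
  have e3 : (b - 1 - 2*(m:ℂ) + 1) = b - 2*m := by ring
  unfold cco
  push_cast
  rw [e1, e2, e3, ← hQ]
  have hm : (m.factorial : ℂ) ≠ 0 := Nat.cast_ne_zero.mpr (Nat.factorial_ne_zero m)
  have hm1 : (m : ℂ) + 1 ≠ 0 := Nat.cast_add_one_ne_zero m
  rw [Nat.factorial_succ]
  push_cast
  field_simp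
  ring


noncomputable def B (n : ℤ) (a : ℂ) : ℕ → ℂ
  | s => cco a s - ∑ k ∈ (Finset.range s).attach,
      cco (a + (n : ℂ) - 2 * ((k : ℕ) : ℂ)) (s - (k : ℕ)) * B n a (k : ℕ)
  decreasing_by exact Finset.mem_range.mp k.2

lemma B_spec (n : ℤ) (a : ℂ) (s : ℕ) :
    B n a s = cco a s - ∑ k ∈ Finset.range s,
      cco (a + (n : ℂ) - 2 * (k : ℂ)) (s - k) * B n a k := by
  rw [B, ← Finset.sum_attach (Finset.range s)
    (fun k => cco (a + (n : ℂ) - 2 * (k : ℂ)) (s - k) * B n a k)]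

lemma B_sum (n : ℤ) (a : ℂ) (s : ℕ) :
    ∑ k ∈ Finset.range (s+1), cco (a + (n : ℂ) - 2 * (k : ℂ)) (s - k) * B n a k
      = cco a s := by
  rw [Finset.sum_range_succ, B_spec n a s]
  simp [cco_zero]

lemma B_unique (n : ℤ) (a : ℂ) (g : ℕ → ℂ)
    (hg : ∀ s, ∑ k ∈ Finset.range (s+1),
      cco (a + (n : ℂ) - 2 * (k : ℂ)) (s - k) * g k = cco a s) :
    ∀ s, g s = B n a s := by
  intro s
  induction s using Nat.strong_induction_on with
  | _ s ih =>
    have h1 := hg s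
    have h2 := B_sum n a s
    rw [Finset.sum_range_succ] at h1 h2
    have h3 : ∑ k ∈ Finset.range s, cco (a + (n : ℂ) - 2 * (k : ℂ)) (s - k) * g k
        = ∑ k ∈ Finset.range s, cco (a + (n : ℂ) - 2 * (k : ℂ)) (s - k) * B n a k := by
      refine Finset.sum_congr rfl fun k hk => ?_
      rw [ih k (Finset.mem_range.mp hk)]
    rw [h3] at h1
    have := h1.trans h2.symm
    simpa [cco_zero] using this


lemma B_step (n : ℤ) (a : ℂ) (s : ℕ) :
    B (n+1) a s = B n a s +
      (if s = 0 then 0 else ((a + (n:ℂ) + 2 - 2*(s:ℂ))/2) * B n a (s-1)) := by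
  have key : ∀ s : ℕ, ∑ k ∈ Finset.range (s+1),
      cco (a + ((n+1 : ℤ) : ℂ) - 2 * (k : ℂ)) (s - k) *
        (B n a k + (if k = 0 then 0 else ((a + (n:ℂ) + 2 - 2*(k:ℂ))/2) * B n a (k-1)))
      = cco a s := by
    intro s
    have split : ∀ k : ℕ, cco (a + ((n+1 : ℤ) : ℂ) - 2 * (k : ℂ)) (s - k) *
        (B n a k + (if k = 0 then 0 else ((a + (n:ℂ) + 2 - 2*(k:ℂ))/2) * B n a (k-1)))
        = cco (a + ((n+1 : ℤ) : ℂ) - 2 * (k : ℂ)) (s - k) * B n a k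
          + cco (a + ((n+1 : ℤ) : ℂ) - 2 * (k : ℂ)) (s - k) *
            (if k = 0 then 0 else ((a + (n:ℂ) + 2 - 2*(k:ℂ))/2) * B n a (k-1)) := by
      intro k; ring
    rw [Finset.sum_congr rfl fun k _ => split k, Finset.sum_add_distrib]
    -- second sum: peel the k = 0 term (which is 0) and shift index
    rw [Finset.sum_range_succ' (fun k => cco (a + ((n+1 : ℤ) : ℂ) - 2 * (k : ℂ)) (s - k) *
            (if k = 0 then 0 else ((a + (n:ℂ) + 2 - 2*(k:ℂ))/2) * B n a (k-1)))]
    simp only [if_pos rfl, mul_zero, add_zero, Nat.add_sub_cancel]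
    -- first sum: peel the k = s term
    rw [Finset.sum_range_succ (fun k => cco (a + ((n+1 : ℤ) : ℂ) - 2 * (k : ℂ)) (s - k) * B n a k)]
    have hlast : cco (a + ((n+1 : ℤ) : ℂ) - 2 * (s : ℂ)) (s - s) * B n a s = B n a s := by
      rw [Nat.sub_self, cco_zero, one_mul]
    rw [hlast]
    have combine : ∀ k ∈ Finset.range s,
        cco (a + ((n+1 : ℤ) : ℂ) - 2 * (k : ℂ)) (s - k) * B n a k
          + cco (a + ((n+1 : ℤ) : ℂ) - 2 * ((k+1 : ℕ) : ℂ)) (s - (k+1)) *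
            (if (k+1 : ℕ) = 0 then 0 else ((a + (n:ℂ) + 2 - 2*((k+1:ℕ):ℂ))/2) * B n a k)
        = cco (a + (n : ℂ) - 2 * (k : ℂ)) (s - k) * B n a k := by
      intro k hk
      have hk' := Finset.mem_range.mp hk
      have hsk : s - k = (s - k - 1) + 1 := by omega
      set b := a + (n : ℂ) - 2 * (k : ℂ) with hb
      have h1 : a + ((n+1 : ℤ) : ℂ) - 2 * (k : ℂ) = b + 1 := by push_cast; ring
      have h2 : a + ((n+1 : ℤ) : ℂ) - 2 * ((k+1 : ℕ) : ℂ) = b - 1 := by push_cast; ring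
      have h3 : (a + (n:ℂ) + 2 - 2*((k+1:ℕ):ℂ))/2 = b / 2 := by push_cast; ring
      have h4 : s - (k+1) = s - k - 1 := by omega
      rw [h1, h2, h3, h4, if_neg (Nat.succ_ne_zero k)]
      have := cco_rec b (s - k - 1)
      rw [← hsk] at this
      calc cco (b+1) (s-k) * B n a k + cco (b-1) (s-k-1) * (b/2 * B n a k)
          = (cco (b+1) (s-k) + b/2 * cco (b-1) (s-k-1)) * B n a k := by ring
        _ = cco b (s-k) * B n a k := by rw [this]
    have hsum : ∑ k ∈ Finset.range s, cco (a + ((n+1 : ℤ) : ℂ) - 2 * (k : ℂ)) (s - k) * B n a k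
          + ∑ k ∈ Finset.range s, cco (a + ((n+1 : ℤ) : ℂ) - 2 * ((k+1 : ℕ) : ℂ)) (s - (k+1)) *
            (if (k+1 : ℕ) = 0 then 0 else ((a + (n:ℂ) + 2 - 2*((k+1:ℕ):ℂ))/2) * B n a k)
        = ∑ k ∈ Finset.range s, cco (a + (n : ℂ) - 2 * (k : ℂ)) (s - k) * B n a k := by
      rw [← Finset.sum_add_distrib]
      exact Finset.sum_congr rfl combine
    push_cast at hsum ⊢
    rw [mul_zero, add_zero, add_right_comm, hsum]
    have := B_sum n a s
    rw [Finset.sum_range_succ] at this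
    rw [Nat.sub_self, cco_zero, one_mul] at this
    exact this
  exact (B_unique (n+1) a _ key s).symm

lemma B_zero_eq_one (n : ℤ) (a : ℂ) : B n a 0 = 1 := by
  rw [B_spec]; simp [cco_zero]

lemma B_nil (a : ℂ) : ∀ s : ℕ, 1 ≤ s → B 0 a s = 0 := by
  intro s
  induction s using Nat.strong_induction_on with
  | _ s ih =>
    intro hs
    obtain ⟨t, rfl⟩ : ∃ t, s = t + 1 := ⟨s - 1, by omega⟩
    rw [B_spec]
    rw [Finset.sum_range_succ' (fun k => cco (a + ((0:ℤ) : ℂ) - 2 * (k : ℂ)) (t + 1 - k) * B 0 a k)]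
    have h0 : cco (a + ((0:ℤ) : ℂ) - 2 * ((0:ℕ) : ℂ)) (t + 1 - 0) * B 0 a 0 = cco a (t+1) := by
      rw [B_zero_eq_one]
      norm_num
    have h1 : ∑ i ∈ Finset.range t,
        cco (a + ((0:ℤ) : ℂ) - 2 * ((i+1 : ℕ) : ℂ)) (t + 1 - (i+1)) * B 0 a (i+1) = 0 := by
      refine Finset.sum_eq_zero fun i hi => ?_
      rw [ih (i+1) (Nat.succ_lt_succ (Finset.mem_range.mp hi)) (Nat.le_add_left 1 i)]
      ring
    push_cast at h0 h1 ⊢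
    rw [h1, h0]
    ring

lemma B_vanish (a : ℂ) : ∀ (m : ℕ) (s : ℕ), m < s → B (m : ℤ) a s = 0 := by
  intro m
  induction m with
  | zero => intro s hs; exact_mod_cast B_nil a s hs
  | succ m ih =>
    intro s hs
    have h1 : ((m+1 : ℕ) : ℤ) = (m : ℤ) + 1 := by push_cast; ring
    rw [h1, B_step]
    rw [ih s (by omega), if_neg (by omega : ¬ s = 0), ih (s-1) (by omega)]
    ring

/-- Chains sum -/
noncomputable def T (n : ℤ) (a : ℂ) (s j : ℕ) : ℂ :=
  ∑ t ∈ Finset.univ.filter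
      (fun t : Fin (j + 1) → Fin s => ∀ i l : Fin (j + 1), i < l → t l < t i),
    cco a (t (Fin.last j) : ℕ) *
      ∏ i : Fin (j + 1),
        cco (a + (n : ℂ) - 2 * ((t i : ℕ) : ℂ))
          ((if (i : ℕ) = 0 then s else ((t (i - 1) : ℕ))) - (t i : ℕ))

lemma bco_eq (n : ℤ) (a : ℂ) (s : ℕ) :
    bco n a s = cco a s + ∑ j ∈ Finset.range s, (-1 : ℂ) ^ (j + 1) * T n a s j := rfl

lemma T_zero (n : ℤ) (a : ℂ) (k j : ℕ) (h : k ≤ j) : T n a k j = 0 := by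
  unfold T
  refine Finset.sum_eq_zero fun t ht => ?_
  exfalso
  have hdec := (Finset.mem_filter.mp ht).2
  have hinj : Function.Injective t := by
    intro i l hil
    rcases lt_trichotomy i l with h' | h' | h'
    · exact absurd hil (ne_of_lt (hdec i l h')).symm
    · exact h'
    · exact absurd hil.symm (ne_of_lt (hdec l i h')).symm
  have := Fintype.card_le_of_injective t hinj
  simp only [Fintype.card_fin] at this
  omega

lemma T_one (n : ℤ) (a : ℂ) (s : ℕ) :
    T n a s 0 = ∑ k ∈ Finset.range s,
      cco a k * cco (a + (n : ℂ) - 2 * (k : ℂ)) (s - k) := by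
  unfold T
  have hfil : (Finset.univ.filter
      (fun t : Fin 1 → Fin s => ∀ i l : Fin 1, i < l → t l < t i)) = Finset.univ := by
    refine Finset.filter_true_of_mem fun t _ => ?_
    intro i l hil
    have h1 := i.isLt
    have h2 := l.isLt
    have h3 := Fin.lt_def.mp hil
    omega
  rw [hfil]
  rw [← Fin.sum_univ_eq_sum_range (fun k => cco a k * cco (a + (n : ℂ) - 2 * (k : ℂ)) (s - k)) s]
  rw [← Equiv.sum_comp (Equiv.funUnique (Fin 1) (Fin s)) _]
  refine Finset.sum_congr rfl fun t _ => ?_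
  rw [Fin.prod_univ_one]
  rfl

lemma T_cast (n : ℤ) (a : ℂ) (s k j : ℕ) (hks : k ≤ s) :
    T n a k j = ∑ t ∈ Finset.univ.filter
        (fun t : Fin (j+1) → Fin s =>
          (∀ i l : Fin (j+1), i < l → t l < t i) ∧ ((t 0 : ℕ) < k)),
      cco a (t (Fin.last j) : ℕ) *
        ∏ i : Fin (j+1), cco (a + (n : ℂ) - 2*((t i:ℕ):ℂ))
          ((if (i:ℕ)=0 then k else (t (i-1):ℕ)) - (t i:ℕ)) := by
  unfold T
  refine Finset.sum_bij' (i := fun t _ => Fin.castLE hks ∘ t)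
    (j := fun t ht => fun i => ⟨(t i : ℕ), ?_⟩) ?_ ?_ ?_ ?_ ?_
  · -- (t i : ℕ) < k
    obtain ⟨hdec, h0⟩ := (Finset.mem_filter.mp ht).2
    rcases eq_or_ne i 0 with rfl | hi
    · exact h0
    · have : (0 : Fin (j+1)) < i := Fin.pos_of_ne_zero hi
      exact lt_trans (Fin.lt_def.mp (hdec 0 i this)) h0
  · -- forward membership
    intro t ht
    have hdec := (Finset.mem_filter.mp ht).2
    refine Finset.mem_filter.mpr ⟨Finset.mem_univ _, ?_, ?_⟩
    · intro i l hil
      exact Fin.lt_def.mpr (Fin.lt_def.mp (hdec i l hil))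
    · exact (t 0).isLt
  · -- backward membership
    intro t ht
    obtain ⟨hdec, h0⟩ := (Finset.mem_filter.mp ht).2
    refine Finset.mem_filter.mpr ⟨Finset.mem_univ _, ?_⟩
    intro i l hil
    exact Fin.lt_def.mpr (Fin.lt_def.mp (hdec i l hil))
  · intro t ht; funext i; apply Fin.ext; simp
  · intro t ht; funext i; apply Fin.ext; simp
  · intro t ht
    simp only [Function.comp_apply, Fin.coe_castLE]

lemma succ_sub_one_eq (m : ℕ) (i : Fin (m+1)) : (i.succ - 1) = i.castSucc := by
  apply Fin.ext
  rw [Fin.coe_sub_one, if_neg (Fin.succ_ne_zero i)]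
  simp

lemma castSucc_eq_sub_one_succ (m : ℕ) (i : Fin (m+1)) (hi : i ≠ 0) :
    i.castSucc = (i - 1).succ := by
  apply Fin.ext
  rw [Fin.coe_castSucc, Fin.val_succ, Fin.coe_sub_one, if_neg hi]
  have : (i : ℕ) ≠ 0 := fun h => hi (Fin.ext h)
  omega

lemma T_split (n : ℤ) (a : ℂ) (s j : ℕ) :
    T n a s (j+1) = ∑ k : Fin s, cco (a + (n : ℂ) - 2*((k:ℕ):ℂ)) (s - (k:ℕ)) *
      ∑ t ∈ Finset.univ.filter
          (fun t : Fin (j+1) → Fin s =>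
            (∀ i l : Fin (j+1), i < l → t l < t i) ∧ ((t 0:ℕ) < (k:ℕ))),
        cco a (t (Fin.last j):ℕ) *
          ∏ i : Fin (j+1), cco (a + (n : ℂ) - 2*((t i:ℕ):ℂ))
            ((if (i:ℕ)=0 then (k:ℕ) else (t (i-1):ℕ)) - (t i:ℕ)) := by
  simp only [Finset.mul_sum]
  rw [← Finset.sum_sigma (Finset.univ : Finset (Fin s))
      (fun k => Finset.univ.filter
          (fun t : Fin (j+1) → Fin s =>
            (∀ i l : Fin (j+1), i < l → t l < t i) ∧ ((t 0:ℕ) < (k:ℕ))))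
      (fun p => cco (a + (n : ℂ) - 2*((p.1:ℕ):ℂ)) (s - (p.1:ℕ)) *
        (cco a (p.2 (Fin.last j):ℕ) *
          ∏ i : Fin (j+1), cco (a + (n : ℂ) - 2*((p.2 i:ℕ):ℂ))
            ((if (i:ℕ)=0 then (p.1:ℕ) else (p.2 (i-1):ℕ)) - (p.2 i:ℕ))))]
  unfold T
  refine Finset.sum_bij' (i := fun t _ => (⟨t 0, fun i => t i.succ⟩ :
      (k : Fin s) × (Fin (j+1) → Fin s)))
    (j := fun p _ => fun i => Fin.cases p.1 p.2 i) ?_ ?_ ?_ ?_ ?_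
  · -- forward membership
    intro t ht
    have hdec := (Finset.mem_filter.mp ht).2
    refine Finset.mem_sigma.mpr ⟨Finset.mem_univ _, Finset.mem_filter.mpr
      ⟨Finset.mem_univ _, ?_, ?_⟩⟩
    · intro i l hil
      exact hdec i.succ l.succ (Fin.succ_lt_succ_iff.mpr hil)
    · have h01 : (0 : Fin (j+2)) < (0 : Fin (j+1)).succ := by
        rw [Fin.lt_def]; simp
      exact Fin.lt_def.mp (hdec 0 (0 : Fin (j+1)).succ h01)
  · -- backward membership
    intro p hp
    obtain ⟨hdec, h0⟩ := (Finset.mem_filter.mp (Finset.mem_sigma.mp hp).2).2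
    refine Finset.mem_filter.mpr ⟨Finset.mem_univ _, ?_⟩
    intro i l hil
    induction l using Fin.cases with
    | zero => exact absurd hil (Fin.not_lt_zero i)
    | succ l' =>
      induction i using Fin.cases with
      | zero =>
        simp only [Fin.cases_zero, Fin.cases_succ]
        rcases eq_or_ne l' 0 with rfl | hl'
        · exact Fin.lt_def.mpr h0
        · exact lt_trans (hdec 0 l' (Fin.pos_of_ne_zero hl')) (Fin.lt_def.mpr h0)
      | succ i' =>
        simp only [Fin.cases_succ]
        exact hdec i' l' (Fin.succ_lt_succ_iff.mp hil)
  · -- left inverse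
    intro t ht
    funext i
    induction i using Fin.cases with
    | zero => simp only [Fin.cases_zero]
    | succ i' => simp only [Fin.cases_succ]
  · -- right inverse
    intro p hp
    apply Sigma.ext
    · simp
    · simp
  · -- value equality
    intro t ht
    rw [Fin.prod_univ_succ]
    have hlast : t (Fin.last (j+1)) = t (Fin.last j).succ := by rw [Fin.succ_last]
    have h0 : (((0 : Fin (j+2)) : ℕ) = 0) := rfl
    rw [hlast]
    have hprod : ∀ i : Fin (j+1),
        cco (a + (n : ℂ) - 2 * ((t i.succ : ℕ) : ℂ))
          ((if (i.succ : ℕ) = 0 then s else (t (i.succ - 1) : ℕ)) - (t i.succ : ℕ))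
        = cco (a + (n : ℂ) - 2 * ((t i.succ : ℕ) : ℂ))
          ((if (i : ℕ) = 0 then ((t 0 : Fin s) : ℕ) else (t (i - 1).succ : ℕ)) - (t i.succ : ℕ)) := by
      intro i
      congr 1
      rw [if_neg (by simp : ¬ ((i.succ : ℕ) = 0))]
      rw [succ_sub_one_eq]
      rcases eq_or_ne i 0 with rfl | hi
      · simp
      · have hne : ((i:ℕ) ≠ 0) := fun h => hi (Fin.ext h)
        rw [if_neg hne, ← castSucc_eq_sub_one_succ _ i hi]
    rw [Finset.prod_congr rfl (fun i _ => hprod i)]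
    simp only [if_pos h0]
    ring

lemma bco_rec (n : ℤ) (a : ℂ) (s : ℕ) :
    bco n a s = cco a s - ∑ k ∈ Finset.range s,
      cco (a + (n : ℂ) - 2 * (k : ℂ)) (s - k) * bco n a k := by
  rcases Nat.eq_zero_or_pos s with rfl | hs
  · simp [bco_eq]
  obtain ⟨u, rfl⟩ : ∃ u, s = u + 1 := ⟨s - 1, by omega⟩
  rw [bco_eq]
  rw [Finset.sum_range_succ' (fun j => (-1 : ℂ) ^ (j + 1) * T n a (u+1) j)]
  have step1 : ∀ j, T n a (u+1) (j+1) = ∑ k : Fin (u+1),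
      cco (a + (n : ℂ) - 2*((k:ℕ):ℂ)) (u+1 - (k:ℕ)) * T n a (k:ℕ) j := by
    intro j
    rw [T_split]
    exact Finset.sum_congr rfl fun k _ => by
      rw [← T_cast n a (u+1) (k:ℕ) j (le_of_lt k.isLt)]
  have step2 : ∀ k : ℕ, k ≤ u →
      ∑ j ∈ Finset.range u, (-1 : ℂ) ^ (j + 1) * T n a k j = bco n a k - cco a k := by
    intro k hk
    rw [bco_eq]
    have : ∑ j ∈ Finset.range u, (-1 : ℂ) ^ (j + 1) * T n a k j
        = ∑ j ∈ Finset.range k, (-1 : ℂ) ^ (j + 1) * T n a k j := by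
      refine (Finset.sum_subset (Finset.range_subset_range.mpr hk) fun j _ hj => ?_).symm
      rw [T_zero n a k j (by simpa using hj), mul_zero]
    rw [this]
    ring
  have main : ∑ j ∈ Finset.range u, (-1 : ℂ) ^ ((j+1) + 1) * T n a (u+1) (j+1)
      = ∑ k ∈ Finset.range (u+1), (-(cco (a + (n : ℂ) - 2*(k:ℂ)) (u+1-k) *
          (bco n a k - cco a k))) := by
    calc ∑ j ∈ Finset.range u, (-1 : ℂ) ^ ((j+1) + 1) * T n a (u+1) (j+1)
        = ∑ j ∈ Finset.range u, ∑ k : Fin (u+1), (-1 : ℂ) ^ ((j+1) + 1) *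
            (cco (a + (n : ℂ) - 2*((k:ℕ):ℂ)) (u+1 - (k:ℕ)) * T n a (k:ℕ) j) := by
          refine Finset.sum_congr rfl fun j _ => ?_
          rw [step1 j, Finset.mul_sum]
      _ = ∑ k : Fin (u+1), ∑ j ∈ Finset.range u, (-1 : ℂ) ^ ((j+1) + 1) *
            (cco (a + (n : ℂ) - 2*((k:ℕ):ℂ)) (u+1 - (k:ℕ)) * T n a (k:ℕ) j) := by
          rw [Finset.sum_comm]
      _ = ∑ k : Fin (u+1), (-(cco (a + (n : ℂ) - 2*((k:ℕ):ℂ)) (u+1-(k:ℕ)) *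
            (bco n a (k:ℕ) - cco a (k:ℕ)))) := by
          refine Finset.sum_congr rfl fun k _ => ?_
          have hk : (k:ℕ) ≤ u := Nat.lt_succ_iff.mp k.isLt
          rw [← step2 (k:ℕ) hk, Finset.mul_sum, ← Finset.sum_neg_distrib]
          refine Finset.sum_congr rfl fun j _ => ?_
          ring
      _ = _ := Fin.sum_univ_eq_sum_range
            (fun k : ℕ => -(cco (a + (n : ℂ) - 2*(k:ℂ)) (u+1-k) * (bco n a k - cco a k)))
            (u+1)
  rw [main, T_one]
  have hpow : ((-1:ℂ))^(0+1) = -1 := by norm_num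
  rw [hpow, neg_one_mul, ← Finset.sum_neg_distrib, ← Finset.sum_add_distrib,
    sub_eq_add_neg, ← Finset.sum_neg_distrib]
  congr 1
  refine Finset.sum_congr rfl fun k _ => ?_
  ring


lemma bco_eq_B (n : ℤ) (a : ℂ) : ∀ s : ℕ, bco n a s = B n a s := by
  intro s
  induction s using Nat.strong_induction_on with
  | _ s ih =>
    rw [bco_rec, B_spec]
    congr 1
    refine Finset.sum_congr rfl fun k hk => ?_
    rw [ih k (Finset.mem_range.mp hk)]

theorem stmt_9 (a : ℂ) (n : ℕ) :
    ∀ s : ℕ, n < s → bco (n : ℤ) a s = 0 := by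
  intro s hs
  rw [bco_eq_B]
  exact B_vanish a n s hs
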